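/- (T followed by its inverse is the identity.) For every term T of ForNo and every state ω = (φ, c), we have ⟨T;−T, (φ, c)⟩ ⇓ (φ', c') with φ' = φ and c' = c; that is, T;−T behaves as SKIP. -/

import Mathlib

set_option linter.unusedVariables false

namespace ForNo

/-- Registers. -/
abbrev Reg := ℕ
/-- Stacks of natural numbers; the head is the top. -/
abbrev Stack := List ℕ
/-- Stores map registers to stacks. -/
abbrev Store := Reg → Stack
/-- A state is a store together with an error counter. -/
abbrev FState := Store × ℕ

/-- The store mapping every register to the empty stack. -/
def emptyStore : Store := fun _ => []

/-- Store update. -/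
def upd (φ : Store) (x : Reg) (s : Stack) : Store := fun y => if y = x then s else φ y

/-- Counter-guarded push operation. -/
def pushOp (n : ℕ) : Stack × ℕ → Stack × ℕ
  | (s, 0) => (n :: s, 0)
  | (s, c + 1) => if s.head? = some n then (s, c + 1) else (s, c)

/-- Counter-guarded pop operation. -/
def popOp (n : ℕ) : Stack × ℕ → Stack × ℕ
  | (s, c) =>
      if s.head? = some n then
        match c with
        | 0 => (s.tail, 0)
        | c + 1 => (s, c + 1)
      else (s, c + 1)

mutual
  /-- Terms of the (raw) language. -/
  inductive Term : Type where
    | skip : Term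
    | push : ℕ → Reg → Term
    | pop : ℕ → Reg → Term
    | seq : Term → Term → Term
    | ifeq : Reg → ℕ → Term → Term
    | normal : List Reg → Term → Term
    | fort : Reg → Bodies → Term
    | roft : Reg → Bodies → Term
  /-- Nonempty lists of iteration bodies. -/
  inductive Bodies : Type where
    | single : Term → Bodies
    | cons : Term → Bodies → Bodies
end

/-- `ps.get i` is `P_min(i,m)` where `ps = P₀ … P_m`. -/
def Bodies.get : Bodies → ℕ → Term
  | .single t, _ => t
  | .cons t _, 0 => t
  | .cons _ ps, i + 1 => ps.get i

mutual
  /-- Big-step operational semantics `⟨T, ω⟩ ⇓ ω'`. -/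
  inductive Eval : Term → FState → FState → Prop where
    | skip : ∀ ω, Eval .skip ω ω
    | seq : ∀ {t u : Term} {ω ω' ω'' : FState},
        Eval t ω ω' → Eval u ω' ω'' → Eval (.seq t u) ω ω''
    | push : ∀ (n : ℕ) (x : Reg) (φ : Store) (c : ℕ),
        Eval (.push n x) (φ, c) (upd φ x (pushOp n (φ x, c)).1, (pushOp n (φ x, c)).2)
    | pop : ∀ (n : ℕ) (x : Reg) (φ : Store) (c : ℕ),
        Eval (.pop n x) (φ, c) (upd φ x (popOp n (φ x, c)).1, (popOp n (φ x, c)).2)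
    | ifeq_true : ∀ {x n t} {φ : Store} {c : ℕ} {ω' : FState},
        (φ x).head? = some n → Eval t (φ, c) ω' → Eval (.ifeq x n t) (φ, c) ω'
    | ifeq_false : ∀ {x n t} (φ : Store) (c : ℕ),
        (φ x).head? ≠ some n → Eval (.ifeq x n t) (φ, c) (φ, c)
    | normal : ∀ {xs t ω ω'}, Eval t ω ω' → Eval (.normal xs t) ω ω'
    | fort : ∀ {x ps ω ω'}, EvalList (ω.1 x) ps ω ω' → Eval (.fort x ps) ω ω'
    | roft : ∀ {x ps ω ω'}, EvalList (ω.1 x).reverse ps ω ω' → Eval (.roft x ps) ω ω'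
  /-- Iteration judgment `⟦s, ps, ω⟧ ⇓ ω'`. -/
  inductive EvalList : Stack → Bodies → FState → FState → Prop where
    | nil : ∀ (ps : Bodies) (ω : FState), EvalList [] ps ω ω
    | cons : ∀ {i : ℕ} {t : Stack} {ps : Bodies} {ω ω'' ω' : FState},
        Eval (ps.get i) ω ω'' → EvalList t ps ω'' ω' → EvalList (i :: t) ps ω ω'
end

mutual
  /-- The inversion map `−(·)` on terms. -/
  def Term.inv : Term → Term
    | .skip => .skip
    | .push n x => .pop n x
    | .pop n x => .push n x
    | .seq t u => .seq u.inv t.inv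
    | .ifeq x n t => .ifeq x n t.inv
    | .normal xs t => .normal xs t.inv
    | .fort x ps => .roft x ps.inv
    | .roft x ps => .fort x ps.inv
  def Bodies.inv : Bodies → Bodies
    | .single t => .single t.inv
    | .cons t ps => .cons t.inv ps.inv
end

mutual
  /-- `t.Writes y` holds iff some `PUSH`/`POP` occurring in `t` writes register `y`. -/
  def Term.Writes : Term → Reg → Prop
    | .skip, _ => False
    | .push _ x, y => x = y
    | .pop _ x, y => x = y
    | .seq t u, y => t.Writes y ∨ u.Writes y
    | .ifeq _ _ t, y => t.Writes y
    | .normal _ t, y => t.Writes y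
    | .fort _ ps, y => ps.Writes y
    | .roft _ ps, y => ps.Writes y
  def Bodies.Writes : Bodies → Reg → Prop
    | .single t, y => t.Writes y
    | .cons t ps, y => t.Writes y ∨ ps.Writes y
end

mutual
  /-- `t.Leads y` holds iff `y` leads some `FOR`/`ROF` iteration occurring in `t`. -/
  def Term.Leads : Term → Reg → Prop
    | .skip, _ => False
    | .push _ _, _ => False
    | .pop _ _, _ => False
    | .seq t u, y => t.Leads y ∨ u.Leads y
    | .ifeq _ _ t, y => t.Leads y
    | .normal _ t, y => t.Leads y
    | .fort x ps, y => x = y ∨ ps.Leads y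
    | .roft x ps, y => x = y ∨ ps.Leads y
  def Bodies.Leads : Bodies → Reg → Prop
    | .single t, y => t.Leads y
    | .cons t ps, y => t.Leads y ∨ ps.Leads y
end

mutual
  /-- `t.Mentions y` holds iff register `y` occurs in `t`. -/
  def Term.Mentions : Term → Reg → Prop
    | .skip, _ => False
    | .push _ x, y => x = y
    | .pop _ x, y => x = y
    | .seq t u, y => t.Mentions y ∨ u.Mentions y
    | .ifeq x _ t, y => x = y ∨ t.Mentions y
    | .normal xs t, y => y ∈ xs ∨ t.Mentions y
    | .fort x ps, y => x = y ∨ ps.Mentions y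
    | .roft x ps, y => x = y ∨ ps.Mentions y
  def Bodies.Mentions : Bodies → Reg → Prop
    | .single t, y => t.Mentions y
    | .cons t ps, y => t.Mentions y ∨ ps.Mentions y
end

mutual
  /-- The finite set of registers occurring in a term. -/
  def Term.regs : Term → Finset Reg
    | .skip => ∅
    | .push _ x => {x}
    | .pop _ x => {x}
    | .seq t u => t.regs ∪ u.regs
    | .ifeq x _ t => insert x t.regs
    | .normal xs t => xs.toFinset ∪ t.regs
    | .fort x ps => insert x ps.regs
    | .roft x ps => insert x ps.regs
  def Bodies.regs : Bodies → Finset Reg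
    | .single t => t.regs
    | .cons t ps => t.regs ∪ ps.regs
end

mutual
  /-- Safe terms: generated by the grammar `S` (no `NORMAL`). -/
  def Term.Safe : Term → Prop
    | .skip => True
    | .push _ _ => True
    | .pop _ _ => True
    | .seq t u => t.Safe ∧ u.Safe
    | .ifeq _ _ t => t.Safe
    | .normal _ _ => False
    | .fort _ ps => ps.Safe
    | .roft _ ps => ps.Safe
  def Bodies.Safe : Bodies → Prop
    | .single t => t.Safe
    | .cons t ps => t.Safe ∧ ps.Safe
end

/-- Raw terms: generated by the grammar `T` (iterations only inside `NORMAL` bodies,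
which must be safe). -/
def Term.Raw : Term → Prop
  | .skip => True
  | .push _ _ => True
  | .pop _ _ => True
  | .seq t u => t.Raw ∧ u.Raw
  | .ifeq _ _ t => t.Raw
  | .normal _ t => t.Safe
  | .fort _ _ => False
  | .roft _ _ => False

mutual
  /-- The read-only constraints (i) and (ii) defining membership in ForNo. -/
  def Term.WF : Term → Prop
    | .skip => True
    | .push _ _ => True
    | .pop _ _ => True
    | .seq t u => t.WF ∧ u.WF
    | .ifeq x _ t => t.WF ∧ ¬ t.Writes x
    | .normal xs t => t.WF ∧ (∀ x ∈ xs, ¬ t.Writes x) ∧ (∀ y, t.Leads y → y ∈ xs)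
    | .fort x ps => ps.WF ∧ ¬ ps.Writes x
    | .roft x ps => ps.WF ∧ ¬ ps.Writes x
  def Bodies.WF : Bodies → Prop
    | .single t => t.WF
    | .cons t ps => t.WF ∧ ps.WF
end

/-- A raw term is in ForNo if it satisfies the read-only constraints. -/
def InForNo (t : Term) : Prop := t.Raw ∧ t.WF

/-- `iterSeq t k` is the `k`-fold sequential composition `t;…;t` (`SKIP` for `k = 0`). -/
def iterSeq (t : Term) : ℕ → Term
  | 0 => .skip
  | 1 => t
  | n + 2 => .seq t (iterSeq t (n + 1))

/-- `mkBodiesAux g i k` is the list of bodies `g i, g (i+1), …, g (i+k)`. -/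
def mkBodiesAux (g : ℕ → Term) : ℕ → ℕ → Bodies
  | i, 0 => .single (g i)
  | i, k + 1 => .cons (g i) (mkBodiesAux g (i + 1) k)

/-- `mkBodies g k` is the list of bodies `g 0, g 1, …, g k`. -/
def mkBodies (g : ℕ → Term) (k : ℕ) : Bodies := mkBodiesAux g 0 k

/-- `COPY(x,y)` with bodies `PUSH[0] y, …, PUSH[k] y`. -/
def COPY (x y : Reg) (k : ℕ) : Term :=
  .normal [x] (.roft x (mkBodies (fun i => .push i y) k))

/-- `n` nested `FOR rgt` iterations around `PUSH[1] p`. -/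
def powNest (rgt p : Reg) : ℕ → Term
  | 0 => .push 1 p
  | n + 1 => .fort rgt (.single (powNest rgt p n))

/-- The term `POW^n`. -/
def POW (rgt p : Reg) (n : ℕ) : Term := .normal [rgt] (powNest rgt p n)

/-- The term `REMOVE-BLANKS` for tape alphabet codes `{0,…,n−1}` and
input alphabet codes `{0,…,m−1}`. -/
def REMOVEBLANKS (rgt g1 : Reg) (n m : ℕ) : Term :=
  .seq (.normal [rgt] (.roft rgt (mkBodies (fun i => .push i g1) (n - 1))))
       (.normal [g1]
         (.seq (.fort g1 (mkBodies (fun i => .pop i rgt) (n - 1)))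
               (.roft g1 (mkBodies (fun i => if i < m then .push i rgt else .skip) m))))

mutual
  /-- Big-step semantics instrumented with the number of rule applications
  in the derivation. -/
  inductive EvalN : ℕ → Term → FState → FState → Prop where
    | skip : ∀ ω, EvalN 1 .skip ω ω
    | seq : ∀ {k l : ℕ} {t u : Term} {ω ω' ω'' : FState},
        EvalN k t ω ω' → EvalN l u ω' ω'' → EvalN (k + l + 1) (.seq t u) ω ω''
    | push : ∀ (n : ℕ) (x : Reg) (φ : Store) (c : ℕ),
        EvalN 1 (.push n x) (φ, c) (upd φ x (pushOp n (φ x, c)).1, (pushOp n (φ x, c)).2)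
    | pop : ∀ (n : ℕ) (x : Reg) (φ : Store) (c : ℕ),
        EvalN 1 (.pop n x) (φ, c) (upd φ x (popOp n (φ x, c)).1, (popOp n (φ x, c)).2)
    | ifeq_true : ∀ {k x n t} {φ : Store} {c : ℕ} {ω' : FState},
        (φ x).head? = some n → EvalN k t (φ, c) ω' → EvalN (k + 1) (.ifeq x n t) (φ, c) ω'
    | ifeq_false : ∀ {x n t} (φ : Store) (c : ℕ),
        (φ x).head? ≠ some n → EvalN 1 (.ifeq x n t) (φ, c) (φ, c)
    | normal : ∀ {k xs t ω ω'}, EvalN k t ω ω' → EvalN (k + 1) (.normal xs t) ω ω'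
    | fort : ∀ {k x ps ω ω'}, EvalListN k (ω.1 x) ps ω ω' → EvalN (k + 1) (.fort x ps) ω ω'
    | roft : ∀ {k x ps ω ω'}, EvalListN k (ω.1 x).reverse ps ω ω' → EvalN (k + 1) (.roft x ps) ω ω'
  inductive EvalListN : ℕ → Stack → Bodies → FState → FState → Prop where
    | nil : ∀ (ps : Bodies) (ω : FState), EvalListN 1 [] ps ω ω
    | cons : ∀ {k l : ℕ} {i : ℕ} {t : Stack} {ps : Bodies} {ω ω'' ω' : FState},
        EvalN k (ps.get i) ω ω'' → EvalListN l t ps ω'' ω' →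
        EvalListN (k + l + 1) (i :: t) ps ω ω'
end

/-! ### Turing machines -/

/-- Deterministic one-tape Turing machines with a semi-infinite tape, input/output
alphabet `S` embedded in the tape alphabet `Γ`, and direction `Bool`
(`false` = left, `true` = right). -/
structure TM (S : Type) where
  Q : Type
  finQ : Fintype Q
  q0 : Q
  qhalt : Q
  Γ : Type
  finΓ : Fintype Γ
  decΓ : DecidableEq Γ
  blank : Γ
  embed : S → Γ
  embed_inj : Function.Injective embed
  blank_notin : ∀ a, embed a ≠ blank
  δ : Q → Γ → Q × Γ × Bool

namespace TM

variable {S : Type}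

/-- Configurations `(u, q, v)`: left tape part (nearest cell first), current state,
right tape part starting with the scanned cell (no trailing blanks). -/
abbrev Config (M : TM S) : Type := List M.Γ × M.Q × List M.Γ

/-- Remove the trailing blanks of a list. -/
def trim (M : TM S) (l : List M.Γ) : List M.Γ :=
  letI := M.decΓ
  (l.reverse.dropWhile (fun a => decide (a = M.blank))).reverse

/-- The single-step transition function. -/
def stepFn (M : TM S) (c : M.Config) : M.Config :=
  let u := c.1
  let q := c.2.1
  let v := c.2.2
  let a := v.headD M.blank
  let r := M.δ q a
  if r.2.2 then (r.2.1 :: u, r.1, v.tail)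
  else (u.tail, r.1, M.trim (u.headD M.blank :: r.2.1 :: v.tail))

/-- Single-step transition relation `c ⇝ c'`. -/
def Step (M : TM S) (c c' : M.Config) : Prop := c.2.1 ≠ M.qhalt ∧ c' = M.stepFn c

/-- `n`-step transition relation `c ⇝ⁿ c'`. -/
def Steps (M : TM S) : ℕ → M.Config → M.Config → Prop
  | 0 => fun c c' => c = c'
  | n + 1 => fun c c'' => ∃ c', M.Step c c' ∧ M.Steps n c' c''

/-- The initial configuration on input `w`. -/
def init (M : TM S) (w : List S) : M.Config := ([], M.q0, w.map M.embed)

/-- `M` is a polynomial-time Turing machine. -/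
def PTime (M : TM S) : Prop :=
  ∃ a b : ℕ, 0 < a ∧ 0 < b ∧ ∀ w : List S,
    ∃ k ≤ a * w.length ^ b, ∃ c : M.Config, M.Steps k (M.init w) c ∧ c.2.1 = M.qhalt

end TM

/-- `f` is computable in polynomial time. -/
def FPTime {S : Type} (f : List S → List S) : Prop :=
  ∃ M : TM S, M.PTime ∧
    ∀ w : List S, ∃ k : ℕ, M.Steps k (M.init w) ([], M.qhalt, (f w).map M.embed)

/-- `f` is honest: the input length is polynomially bounded in the output length. -/
def Honest {S : Type} (f : List S → List S) : Prop :=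
  ∃ q : Polynomial ℕ, ∀ x : List S, x.length ≤ q.eval (f x).length

/-! ### Encodings and computed functions -/

/-- An encoding of a finite alphabet `S`: a bijection onto `{0, …, |S| − 1}`. -/
structure Encoding (S : Type) [Fintype S] where
  enc : S → ℕ
  inj : Function.Injective enc
  lt : ∀ a, enc a < Fintype.card S

/-- Encoding of strings as stacks. -/
def Encoding.encStr {S : Type} [Fintype S] (e : Encoding S) (w : List S) : Stack :=
  w.map e.enc

/-- `T` (with input register `rin` and output register `rout`) computes `f`. -/
def Computes {S : Type} [Fintype S] (e : Encoding S) (T : Term) (rin rout : Reg)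
    (f : List S → List S) : Prop :=
  ∀ x : List S, ∃ φ : Store,
    Eval T (upd emptyStore rin (e.encStr x), 0) (φ, 0) ∧ φ rout = e.encStr (f x)

/-- `T` computes `f` with zero-garbage. -/
def ComputesZG {S : Type} [Fintype S] (e : Encoding S) (T : Term) (rin rout : Reg)
    (f : List S → List S) : Prop :=
  ∀ x : List S, ∃ φ : Store,
    Eval T (upd emptyStore rin (e.encStr x), 0) (φ, 0) ∧ φ rout = e.encStr (f x) ∧
    ∀ y : Reg, y ≠ rout → φ y = []

/-! ### Simulation of Turing machines -/

/-- The register holding the left part of the tape. -/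
def lftR : Reg := 0
/-- The register holding the current state. -/
def qR : Reg := 1
/-- The register holding the right part of the tape. -/
def rgtR : Reg := 2

/-- `σ` simulates configuration `c` (written `σ ≈ c`). -/
def Sim {S : Type} (M : TM S) (encΓ : M.Γ → ℕ) (encQ : M.Q → ℕ)
    (σ : FState) (c : M.Config) : Prop :=
  σ.2 = 0 ∧
  σ.1 lftR = c.1.map encΓ ∧
  (σ.1 qR).head? = some (encQ c.2.1) ∧
  ∃ bs : Stack, (∀ b ∈ bs, b = encΓ M.blank) ∧ σ.1 rgtR = c.2.2.map encΓ ++ bs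

/-- `σ` cleanly simulates configuration `c` (written `σ ≅ c`). -/
def SimClean {S : Type} (M : TM S) (encΓ : M.Γ → ℕ) (encQ : M.Q → ℕ)
    (σ : FState) (c : M.Config) : Prop :=
  σ.2 = 0 ∧
  σ.1 lftR = c.1.map encΓ ∧
  (σ.1 qR).head? = some (encQ c.2.1) ∧
  σ.1 rgtR = c.2.2.map encΓ

/-- The hypotheses of the simulation setup: `encΓ` is a bijection of `Γ` onto
`{0,…,n−1}` giving non-input characters larger codes than input characters,
and `encQ` is an injective encoding of states. -/
def SimSetup {S : Type} (M : TM S) (encΓ : M.Γ → ℕ) (encQ : M.Q → ℕ) : Prop :=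
  Function.Injective encΓ ∧
  (∀ a : M.Γ, encΓ a < @Fintype.card M.Γ M.finΓ) ∧
  (∀ a : M.Γ, (∀ s : S, M.embed s ≠ a) → ∀ s : S, encΓ (M.embed s) < encΓ a) ∧
  Function.Injective encQ


/-! Every well-formed term `T` is reversible: from each state it reaches some state from which
`−T` runs back. The push/pop counter operations are mutually inverse, and sequencing inverts
componentwise. For `IF x = n` and `FOR`/`ROF x` the read-only condition makes the body leave `x`
untouched, so `−T` sees the same guard, resp. the same stack traversed in the opposite order,
and undoes the bodies one at a time. -/

theorem upd_eq_update (φ : Store) (x : Reg) (s : Stack) : upd φ x s = Function.update φ x s := by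
  funext y
  simp only [upd, Function.update_apply]

theorem popOp_pushOp (n : ℕ) (p : Stack × ℕ) : popOp n (pushOp n p) = p := by
  obtain ⟨s, _ | c⟩ := p
  · simp [pushOp, popOp]
  · by_cases h : s.head? = some n <;> simp [pushOp, popOp, h]

theorem pushOp_popOp (n : ℕ) (p : Stack × ℕ) : pushOp n (popOp n p) = p := by
  obtain ⟨_ | ⟨a, s⟩, _ | c⟩ := p <;> simp only [popOp, pushOp] <;> split_ifs <;> simp_all

theorem Eval.pop_of_push (n : ℕ) (x : Reg) (φ : Store) (c : ℕ) :
    Eval (.pop n x) (upd φ x (pushOp n (φ x, c)).1, (pushOp n (φ x, c)).2) (φ, c) := by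
  simpa [upd_eq_update, popOp_pushOp] using
    Eval.pop n x (upd φ x (pushOp n (φ x, c)).1) (pushOp n (φ x, c)).2

theorem Eval.push_of_pop (n : ℕ) (x : Reg) (φ : Store) (c : ℕ) :
    Eval (.push n x) (upd φ x (popOp n (φ x, c)).1, (popOp n (φ x, c)).2) (φ, c) := by
  simpa [upd_eq_update, pushOp_popOp] using
    Eval.push n x (upd φ x (popOp n (φ x, c)).1) (popOp n (φ x, c)).2

theorem Bodies.inv_get : ∀ (ps : Bodies) (i : ℕ), ps.inv.get i = (ps.get i).inv
  | .single _, _ => rfl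
  | .cons _ _, 0 => rfl
  | .cons _ ps, i + 1 => ps.inv_get i

theorem Bodies.not_writes_get : ∀ {ps : Bodies} {y : Reg}, ¬ ps.Writes y →
    ∀ i, ¬ (ps.get i).Writes y
  | .single _, _, h, _ => h
  | .cons _ _, _, h, 0 => fun w => h (Or.inl w)
  | .cons _ ps, _, h, i + 1 => Bodies.not_writes_get (ps := ps) (fun w => h (Or.inr w)) i

mutual

theorem Eval.apply_eq_of_not_writes {y : Reg} : ∀ {t : Term} {ω ω' : FState},
    Eval t ω ω' → ¬ t.Writes y → ω'.1 y = ω.1 y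
  | _, _, _, .skip _, _ => rfl
  | _, _, _, .push .., hy | _, _, _, .pop .., hy =>
    (congrFun (upd_eq_update _ _ _) y).trans (Function.update_of_ne (Ne.symm hy) _ _)
  | _, _, _, .seq h₁ h₂, hy =>
    (h₂.apply_eq_of_not_writes fun w => hy (Or.inr w)).trans
      (h₁.apply_eq_of_not_writes fun w => hy (Or.inl w))
  | _, _, _, .ifeq_true _ h, hy => h.apply_eq_of_not_writes hy
  | _, _, _, .ifeq_false .., _ => rfl
  | _, _, _, .normal h, hy => h.apply_eq_of_not_writes hy
  | _, _, _, .fort h, hy | _, _, _, .roft h, hy => h.apply_eq_of_not_writes hy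

theorem EvalList.apply_eq_of_not_writes {y : Reg} : ∀ {s : Stack} {ps : Bodies} {ω ω' : FState},
    EvalList s ps ω ω' → ¬ ps.Writes y → ω'.1 y = ω.1 y
  | _, _, _, _, .nil .., _ => rfl
  | _, _, _, _, .cons h₁ h₂, hy =>
    (h₂.apply_eq_of_not_writes hy).trans
      (h₁.apply_eq_of_not_writes (Bodies.not_writes_get hy _))

end

theorem EvalList.append {ps : Bodies} {ω₁ ω₂ ω₃ : FState} :
    ∀ {l l' : Stack}, EvalList l ps ω₁ ω₂ → EvalList l' ps ω₂ ω₃ →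
      EvalList (l ++ l') ps ω₁ ω₃
  | [], _, .nil _ _, h' => h'
  | _ :: _, _, .cons h₁ h₂, h' => .cons h₁ (h₂.append h')

def Term.Reversible (t : Term) : Prop := ∀ ω, ∃ ω', Eval t ω ω' ∧ Eval t.inv ω' ω

theorem EvalList.exists_reverse_inv {ps : Bodies} (hps : ∀ i, (ps.get i).Reversible) :
    ∀ (s : Stack) (ω : FState), ∃ ω', EvalList s ps ω ω' ∧ EvalList s.reverse ps.inv ω' ω
  | [], ω => ⟨ω, .nil _ _, .nil _ _⟩
  | i :: s, ω => by
    obtain ⟨ω₁, h₁, h₁'⟩ := hps i ω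
    obtain ⟨ω', h₂, h₂'⟩ := exists_reverse_inv hps s ω₁
    refine ⟨ω', .cons h₁ h₂, ?_⟩
    rw [List.reverse_cons]
    exact h₂'.append (.cons (ps.inv_get i ▸ h₁') (.nil _ _))

mutual

theorem Term.WF.reversible : ∀ {t : Term}, t.WF → t.Reversible
  | .skip, _, ω => ⟨ω, .skip ω, .skip ω⟩
  | .push n x, _, (φ, c) => ⟨_, .push n x φ c, .pop_of_push n x φ c⟩
  | .pop n x, _, (φ, c) => ⟨_, .pop n x φ c, .push_of_pop n x φ c⟩
  | .seq _ _, ⟨ht, hu⟩, ω => by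
    obtain ⟨ω₁, h₁, h₁'⟩ := ht.reversible ω
    obtain ⟨ω₂, h₂, h₂'⟩ := hu.reversible ω₁
    exact ⟨ω₂, .seq h₁ h₂, .seq h₂' h₁'⟩
  | .ifeq x n _, ⟨ht, hx⟩, (φ, c) => by
    by_cases hhd : (φ x).head? = some n
    · obtain ⟨ω', h, h'⟩ := ht.reversible (φ, c)
      have hhd' : (ω'.1 x).head? = some n := h.apply_eq_of_not_writes hx ▸ hhd
      exact ⟨ω', .ifeq_true hhd h, .ifeq_true hhd' h'⟩
    · exact ⟨(φ, c), .ifeq_false φ c hhd, .ifeq_false φ c hhd⟩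
  | .normal _ _, ⟨ht, _⟩, ω => by
    obtain ⟨ω', h, h'⟩ := ht.reversible ω
    exact ⟨ω', .normal h, .normal h'⟩
  | .fort x ps, ⟨hps, hx⟩, (φ, c) => by
    obtain ⟨ω', h, h'⟩ := EvalList.exists_reverse_inv hps.reversible_get (φ x) (φ, c)
    have hx' : ω'.1 x = φ x := h.apply_eq_of_not_writes hx
    exact ⟨ω', .fort h, .roft (hx' ▸ h')⟩
  | .roft x ps, ⟨hps, hx⟩, (φ, c) => by
    obtain ⟨ω', h, h'⟩ := EvalList.exists_reverse_inv hps.reversible_get (φ x).reverse (φ, c)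
    have hx' : ω'.1 x = φ x := h.apply_eq_of_not_writes hx
    exact ⟨ω', .roft h, .fort (hx' ▸ List.reverse_reverse (φ x) ▸ h')⟩

theorem Bodies.WF.reversible_get : ∀ {ps : Bodies}, ps.WF → ∀ i, (ps.get i).Reversible
  | .single _, h, _ => h.reversible
  | .cons _ _, h, 0 => h.1.reversible
  | .cons _ _, h, i + 1 => h.2.reversible_get i

end

end ForNo

open ForNo in
/-- `T;−T` is the identity: `⟨T;−T, (φ,c)⟩ ⇓ (φ',c')` with
`φ' = φ` and `c' = c`. -/
theorem forno_inv_identity (T : Term) (hT : InForNo T) (φ : Store) (c : ℕ) :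
    ∃ (φ' : Store) (c' : ℕ),
      Eval (.seq T T.inv) (φ, c) (φ', c') ∧ φ' = φ ∧ c' = c := by
  obtain ⟨ω', h, h'⟩ := hT.2.reversible (φ, c)
  exact ⟨φ, c, .seq h h', rfl, rfl⟩
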